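/- Let H be a Hopf algebra over a field k and A a right coideal subalgebra of H. If H is a generator in the category of left A-modules or in the category of right A-modules (i.e., the inclusion A → H splits A-linearly), then A = {h ∈ H : (π ⊗ id)Δ(h) = π(1) ⊗ h} where π : H → C = H/HA⁺ is the canonical surjection. -/
import Mathlib

open TensorProduct LinearMap Coalgebra HopfAlgebra

section Conv

variable {k : Type*} [CommRing k] {H : Type*} [Ring H] [HopfAlgebra k H]

/-- Convolution product on linear maps `H ⊗ H → H` w.r.t. the tensor-square coalgebra
structure (written explicitly to avoid the universe-restricted instance). -/
noncomputable def Hconv (f g : H ⊗[k] H →ₗ[k] H) : H ⊗[k] H →ₗ[k] H :=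
  LinearMap.mul' k H ∘ₗ TensorProduct.map f g
    ∘ₗ (TensorProduct.tensorTensorTensorComm k H H H H).toLinearMap
    ∘ₗ TensorProduct.map Coalgebra.comul Coalgebra.comul

lemma Hconv_tmul (f g : H ⊗[k] H →ₗ[k] H) (x y : H) :
    Hconv f g (x ⊗ₜ y) = LinearMap.mul' k H (TensorProduct.map f g
      ((TensorProduct.tensorTensorTensorComm k H H H H)
        (Coalgebra.comul x ⊗ₜ Coalgebra.comul y))) := rfl

/-- Multiplication on `H ⊗ H` via `tensorTensorTensorComm`. -/
lemma mul_eq_map_tttc (u v : H ⊗[k] H) :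
    u * v = TensorProduct.map (LinearMap.mul' k H) (LinearMap.mul' k H)
      ((TensorProduct.tensorTensorTensorComm k H H H H) (u ⊗ₜ v)) := by
  induction u using TensorProduct.induction_on with
  | zero => simp
  | tmul a b =>
    induction v using TensorProduct.induction_on with
    | zero => simp
    | tmul c d => simp [Algebra.TensorProduct.tmul_mul_tmul]
    | add v₁ v₂ h1 h2 => simp [mul_add, tmul_add, h1, h2]
  | add u₁ u₂ h1 h2 => simp [add_mul, add_tmul, h1, h2]

/-- The unit of the convolution algebra: `x ⊗ y ↦ ε(x)ε(y)1`. -/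
noncomputable def Hunit : H ⊗[k] H →ₗ[k] H :=
  Algebra.linearMap k H ∘ₗ LinearMap.mul' k k
    ∘ₗ TensorProduct.map (Coalgebra.counit) (Coalgebra.counit)

lemma Hunit_tmul (x y : H) :
    Hunit (x ⊗ₜ[k] y) = algebraMap k H (Coalgebra.counit (R := k) x *
      Coalgebra.counit (R := k) y) := by
  simp [Hunit]

lemma antipode_one' : antipode (R := k) (1 : H) = 1 := by
  have h := mul_antipode_rTensor_comul_apply (R := k) (A := H) (1 : H)
  rw [Bialgebra.comul_one, Algebra.TensorProduct.one_def] at h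
  simpa using h

lemma Hconv_step1 :
    Hconv ((antipode (R := k) (A := H)) ∘ₗ LinearMap.mul' k H) (LinearMap.mul' k H)
      = Hunit := by
  apply TensorProduct.ext'
  intro x y
  rw [Hconv_tmul, Hunit_tmul]
  have h1 : (TensorProduct.map ((antipode (R := k) (A := H)) ∘ₗ LinearMap.mul' k H)
      (LinearMap.mul' k H)) = (LinearMap.rTensor H (antipode (R := k)))
        ∘ₗ TensorProduct.map (LinearMap.mul' k H) (LinearMap.mul' k H) := by
    apply TensorProduct.ext'
    intro u v
    simp
  rw [h1, LinearMap.comp_apply, ← mul_eq_map_tttc, ← Bialgebra.comul_mul,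
    mul_antipode_rTensor_comul_apply, Bialgebra.counit_mul]

lemma Hconv_step2 :
    Hconv (LinearMap.mul' k H) (LinearMap.mul' k H
        ∘ₗ TensorProduct.map (antipode (R := k)) (antipode (R := k))
        ∘ₗ (TensorProduct.comm k H H).toLinearMap)
      = Hunit := by
  apply TensorProduct.ext'
  intro x y
  rw [Hconv_tmul, Hunit_tmul]
  have key : ∀ u v : H ⊗[k] H,
      LinearMap.mul' k H (TensorProduct.map (LinearMap.mul' k H)
        (LinearMap.mul' k H ∘ₗ TensorProduct.map (antipode (R := k)) (antipode (R := k))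
          ∘ₗ (TensorProduct.comm k H H).toLinearMap)
        ((TensorProduct.tensorTensorTensorComm k H H H H) (u ⊗ₜ v)))
      = LinearMap.mul' k H (LinearMap.lTensor H
          ((LinearMap.mulLeft k (LinearMap.mul' k H (LinearMap.lTensor H (antipode (R := k)) v)))
            ∘ₗ (antipode (R := k))) u) := by
    intro u v
    induction u using TensorProduct.induction_on with
    | zero => simp
    | tmul a b =>
      induction v using TensorProduct.induction_on with
      | zero => simp [LinearMap.mulLeft_zero_eq_zero]
      | tmul c d => simp [mul_assoc]
      | add v₁ v₂ h1 h2 =>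
        have hml : LinearMap.mulLeft k
              (LinearMap.mul' k H (LinearMap.lTensor H (antipode (R := k)) v₁)
                + LinearMap.mul' k H (LinearMap.lTensor H (antipode (R := k)) v₂))
            = LinearMap.mulLeft k
                (LinearMap.mul' k H (LinearMap.lTensor H (antipode (R := k)) v₁))
              + LinearMap.mulLeft k
                (LinearMap.mul' k H (LinearMap.lTensor H (antipode (R := k)) v₂)) := by
          ext w; simp [add_mul]
        simp only [map_add, tmul_add, hml, LinearMap.add_comp, LinearMap.lTensor_add,
          LinearMap.add_apply] at h1 h2 ⊢
        rw [h1, h2]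
    | add u₁ u₂ h1 h2 =>
      simp only [map_add, add_tmul, LinearMap.add_apply] at h1 h2 ⊢
      rw [h1, h2]
  rw [key]
  have hN : LinearMap.mul' k H (LinearMap.lTensor H (antipode (R := k))
      (Coalgebra.comul y)) = algebraMap k H (Coalgebra.counit (R := k) y) :=
    mul_antipode_lTensor_comul_apply y
  rw [hN]
  have hml2 : (LinearMap.mulLeft k (algebraMap k H (Coalgebra.counit (R := k) y)))
      ∘ₗ (antipode (R := k) (A := H)) = Coalgebra.counit (R := k) y • antipode (R := k) := by
    ext w; simp [Algebra.smul_def]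
  rw [hml2, LinearMap.lTensor_smul, LinearMap.smul_apply, map_smul,
    mul_antipode_lTensor_comul_apply, Algebra.smul_def, ← map_mul, mul_comm]

lemma Hconv_unit_right (f : H ⊗[k] H →ₗ[k] H) : Hconv f Hunit = f := by
  apply TensorProduct.ext'
  intro x y
  rw [Hconv_tmul]
  have key : ∀ u v : H ⊗[k] H,
      LinearMap.mul' k H (TensorProduct.map f Hunit
        ((TensorProduct.tensorTensorTensorComm k H H H H) (u ⊗ₜ v)))
      = f ((TensorProduct.rid k H (LinearMap.lTensor H (Coalgebra.counit (R := k)) u))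
          ⊗ₜ (TensorProduct.rid k H (LinearMap.lTensor H (Coalgebra.counit (R := k)) v))) := by
    intro u v
    induction u using TensorProduct.induction_on with
    | zero => simp
    | tmul a b =>
      induction v using TensorProduct.induction_on with
      | zero => simp
      | tmul c d =>
        simp only [tensorTensorTensorComm_tmul, map_tmul, LinearMap.mul'_apply,
          Hunit_tmul, LinearMap.lTensor_tmul, TensorProduct.rid_tmul]
        rw [← Algebra.commutes, ← Algebra.smul_def, ← smul_tmul', map_smul, tmul_smul,
          map_smul, smul_smul]
      | add v₁ v₂ h1 h2 =>
        simp only [map_add, tmul_add, LinearMap.add_apply] at h1 h2 ⊢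
        rw [h1, h2]
    | add u₁ u₂ h1 h2 =>
      simp only [map_add, add_tmul, LinearMap.add_apply] at h1 h2 ⊢
      rw [h1, h2]
  rw [key]
  simp

lemma Hconv_unit_left (f : H ⊗[k] H →ₗ[k] H) : Hconv Hunit f = f := by
  apply TensorProduct.ext'
  intro x y
  rw [Hconv_tmul]
  have key : ∀ u v : H ⊗[k] H,
      LinearMap.mul' k H (TensorProduct.map Hunit f
        ((TensorProduct.tensorTensorTensorComm k H H H H) (u ⊗ₜ v)))
      = f ((TensorProduct.lid k H (LinearMap.rTensor H (Coalgebra.counit (R := k)) u))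
          ⊗ₜ (TensorProduct.lid k H (LinearMap.rTensor H (Coalgebra.counit (R := k)) v))) := by
    intro u v
    induction u using TensorProduct.induction_on with
    | zero => simp
    | tmul a b =>
      induction v using TensorProduct.induction_on with
      | zero => simp
      | tmul c d =>
        simp only [tensorTensorTensorComm_tmul, map_tmul, LinearMap.mul'_apply,
          Hunit_tmul, LinearMap.rTensor_tmul, TensorProduct.lid_tmul]
        rw [← Algebra.smul_def, ← smul_tmul', map_smul, tmul_smul, map_smul, smul_smul]
      | add v₁ v₂ h1 h2 =>
        simp only [map_add, tmul_add, LinearMap.add_apply] at h1 h2 ⊢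
        rw [h1, h2]
    | add u₁ u₂ h1 h2 =>
      simp only [map_add, add_tmul, LinearMap.add_apply] at h1 h2 ⊢
      rw [h1, h2]
  rw [key]
  simp

lemma Hconv_assoc (f g h : H ⊗[k] H →ₗ[k] H) :
    Hconv f (Hconv g h) = Hconv (Hconv f g) h := by
  set W1 : (H ⊗[k] (H ⊗[k] H)) ⊗[k] (H ⊗[k] (H ⊗[k] H)) →ₗ[k] H :=
    LinearMap.mul' k H ∘ₗ TensorProduct.map f
        (LinearMap.mul' k H ∘ₗ TensorProduct.map g h
          ∘ₗ (TensorProduct.tensorTensorTensorComm k H H H H).toLinearMap)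
      ∘ₗ (TensorProduct.tensorTensorTensorComm k H (H ⊗[k] H) H (H ⊗[k] H)).toLinearMap
    with hW1
  set W2 : ((H ⊗[k] H) ⊗[k] H) ⊗[k] ((H ⊗[k] H) ⊗[k] H) →ₗ[k] H :=
    LinearMap.mul' k H ∘ₗ TensorProduct.map
        (LinearMap.mul' k H ∘ₗ TensorProduct.map f g
          ∘ₗ (TensorProduct.tensorTensorTensorComm k H H H H).toLinearMap) h
      ∘ₗ (TensorProduct.tensorTensorTensorComm k (H ⊗[k] H) H (H ⊗[k] H) H).toLinearMap
    with hW2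
  have A1 : ∀ u v : H ⊗[k] H,
      LinearMap.mul' k H (TensorProduct.map f (Hconv g h)
        ((TensorProduct.tensorTensorTensorComm k H H H H) (u ⊗ₜ v)))
      = W1 ((LinearMap.lTensor H (Coalgebra.comul (R := k)) u)
          ⊗ₜ (LinearMap.lTensor H (Coalgebra.comul (R := k)) v)) := by
    intro u v
    induction u using TensorProduct.induction_on with
    | zero => simp only [zero_tmul, tmul_zero, LinearMap.map_zero, LinearEquiv.map_zero]
    | tmul a b =>
      induction v using TensorProduct.induction_on with
      | zero => simp only [zero_tmul, tmul_zero, LinearMap.map_zero, LinearEquiv.map_zero]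
      | tmul c d =>
        simp only [hW1, tensorTensorTensorComm_tmul, map_tmul, LinearMap.mul'_apply,
          LinearMap.lTensor_tmul, LinearMap.comp_apply, LinearEquiv.coe_coe, Hconv_tmul]
      | add v₁ v₂ h1 h2 =>
        simp only [map_add, tmul_add, LinearMap.add_apply] at h1 h2 ⊢
        rw [h1, h2]
    | add u₁ u₂ h1 h2 =>
      simp only [map_add, add_tmul, LinearMap.add_apply] at h1 h2 ⊢
      rw [h1, h2]
  have A2 : ∀ u v : H ⊗[k] H,
      LinearMap.mul' k H (TensorProduct.map (Hconv f g) h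
        ((TensorProduct.tensorTensorTensorComm k H H H H) (u ⊗ₜ v)))
      = W2 ((LinearMap.rTensor H (Coalgebra.comul (R := k)) u)
          ⊗ₜ (LinearMap.rTensor H (Coalgebra.comul (R := k)) v)) := by
    intro u v
    induction u using TensorProduct.induction_on with
    | zero => simp only [zero_tmul, tmul_zero, LinearMap.map_zero, LinearEquiv.map_zero]
    | tmul a b =>
      induction v using TensorProduct.induction_on with
      | zero => simp only [zero_tmul, tmul_zero, LinearMap.map_zero, LinearEquiv.map_zero]
      | tmul c d =>
        simp only [hW2, tensorTensorTensorComm_tmul, map_tmul, LinearMap.mul'_apply,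
          LinearMap.rTensor_tmul, LinearMap.comp_apply, LinearEquiv.coe_coe, Hconv_tmul]
      | add v₁ v₂ h1 h2 =>
        simp only [map_add, tmul_add, LinearMap.add_apply] at h1 h2 ⊢
        rw [h1, h2]
    | add u₁ u₂ h1 h2 =>
      simp only [map_add, add_tmul, LinearMap.add_apply] at h1 h2 ⊢
      rw [h1, h2]
  have A3 : ∀ p q : (H ⊗[k] H) ⊗[k] H,
      W1 (((TensorProduct.assoc k H H H) p) ⊗ₜ ((TensorProduct.assoc k H H H) q))
        = W2 (p ⊗ₜ q) := by
    intro p q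
    induction p using TensorProduct.induction_on with
    | zero => simp only [zero_tmul, tmul_zero, LinearMap.map_zero, LinearEquiv.map_zero]
    | tmul w e =>
      induction q using TensorProduct.induction_on with
      | zero => simp only [zero_tmul, tmul_zero, LinearMap.map_zero, LinearEquiv.map_zero]
      | tmul w' e' =>
        induction w using TensorProduct.induction_on with
        | zero => simp only [zero_tmul, tmul_zero, LinearMap.map_zero, LinearEquiv.map_zero]
        | tmul a b =>
          induction w' using TensorProduct.induction_on with
          | zero => simp only [zero_tmul, tmul_zero, LinearMap.map_zero, LinearEquiv.map_zero]
          | tmul c d =>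
            simp only [hW1, hW2, TensorProduct.assoc_tmul, tensorTensorTensorComm_tmul,
              map_tmul, LinearMap.mul'_apply, LinearMap.comp_apply, LinearEquiv.coe_coe]
            rw [mul_assoc]
          | add w₁ w₂ h1 h2 =>
            simp only [map_add, add_tmul, tmul_add, LinearMap.add_apply] at h1 h2 ⊢
            rw [h1, h2]
        | add w₁ w₂ h1 h2 =>
          simp only [map_add, add_tmul, tmul_add, LinearMap.add_apply] at h1 h2 ⊢
          rw [h1, h2]
      | add q₁ q₂ h1 h2 =>
        simp only [map_add, tmul_add, LinearMap.add_apply] at h1 h2 ⊢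
        rw [h1, h2]
    | add p₁ p₂ h1 h2 =>
      simp only [map_add, add_tmul, LinearMap.add_apply] at h1 h2 ⊢
      rw [h1, h2]
  apply TensorProduct.ext'
  intro x y
  rw [Hconv_tmul, Hconv_tmul, A1, A2, ← Coalgebra.coassoc_apply, ← Coalgebra.coassoc_apply,
    A3]

lemma antipode_mul' (x y : H) :
    antipode (R := k) (x * y) = antipode (R := k) y * antipode (R := k) x := by
  set lam : H ⊗[k] H →ₗ[k] H := (antipode (R := k) (A := H)) ∘ₗ LinearMap.mul' k H with hlam
  set rho : H ⊗[k] H →ₗ[k] H := LinearMap.mul' k H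
    ∘ₗ TensorProduct.map (antipode (R := k)) (antipode (R := k))
    ∘ₗ (TensorProduct.comm k H H).toLinearMap with hrho
  have key : lam = rho := by
    calc lam = Hconv lam Hunit := (Hconv_unit_right lam).symm
    _ = Hconv lam (Hconv (LinearMap.mul' k H) rho) := by rw [Hconv_step2]
    _ = Hconv (Hconv lam (LinearMap.mul' k H)) rho := Hconv_assoc _ _ _
    _ = Hconv Hunit rho := by rw [hlam, Hconv_step1]
    _ = rho := Hconv_unit_left rho
  have := LinearMap.congr_fun key (x ⊗ₜ[k] y)
  simpa [hlam, hrho] using this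

end Conv
variable (k : Type*) [Field k]

/-- `A` is a right coideal subalgebra of `H`: `Δ(A) ⊆ A ⊗ H`. -/
def IsRightCoidealSubalgebra (H : Type*) [Ring H] [HopfAlgebra k H]
    (A : Subalgebra k H) : Prop :=
  ∀ a ∈ A, Coalgebra.comul a ∈
    LinearMap.range (TensorProduct.mapIncl (Subalgebra.toSubmodule A) (⊤ : Submodule k H))

/-- The left ideal coideal `HA⁺` of `H`, as a `k`-submodule. -/
noncomputable def HAplus (H : Type*) [Ring H] [HopfAlgebra k H] (A : Subalgebra k H) :
    Submodule k H :=
  Submodule.span k {z : H | ∃ h : H, ∃ a ∈ A, Coalgebra.counit (R := k) a = 0 ∧ z = h * a}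

section Aux

variable {k} {H : Type*} [Ring H] [HopfAlgebra k H] (A : Subalgebra k H)

lemma mkQ_of_mem_A {b : H} (hb : b ∈ A) :
    (HAplus k H A).mkQ b = Coalgebra.counit (R := k) b • (HAplus k H A).mkQ 1 := by
  have hmem : b - Coalgebra.counit (R := k) b • 1 ∈ HAplus k H A := by
    apply Submodule.subset_span
    refine ⟨1, b - Coalgebra.counit (R := k) b • 1,
      A.sub_mem hb (A.smul_mem A.one_mem _), ?_, (one_mul _).symm⟩
    rw [map_sub, map_smul, Bialgebra.counit_one, smul_eq_mul, mul_one, sub_self]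
  have h0 : (HAplus k H A).mkQ (b - Coalgebra.counit (R := k) b • 1) = 0 := by
    rw [Submodule.mkQ_apply, Submodule.Quotient.mk_eq_zero]
    exact hmem
  rw [map_sub, map_smul, sub_eq_zero] at h0
  exact h0

lemma coinv_of_mem (hA : IsRightCoidealSubalgebra k H A) {a : H} (ha : a ∈ A) :
    LinearMap.rTensor H (HAplus k H A).mkQ (Coalgebra.comul a) =
      (HAplus k H A).mkQ 1 ⊗ₜ[k] a := by
  obtain ⟨w, hw⟩ := hA a ha
  have claim : ∀ w : (Subalgebra.toSubmodule A) ⊗[k] (⊤ : Submodule k H),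
      LinearMap.rTensor H (HAplus k H A).mkQ
          (TensorProduct.mapIncl (Subalgebra.toSubmodule A) (⊤ : Submodule k H) w)
        = (HAplus k H A).mkQ 1 ⊗ₜ[k]
            ((TensorProduct.lid k H) (LinearMap.rTensor H (Coalgebra.counit (R := k))
              (TensorProduct.mapIncl (Subalgebra.toSubmodule A) (⊤ : Submodule k H) w))) := by
    intro w
    induction w using TensorProduct.induction_on with
    | zero => simp
    | tmul b c =>
      simp only [TensorProduct.mapIncl, TensorProduct.map_tmul, Submodule.coe_subtype,
        LinearMap.rTensor_tmul, TensorProduct.lid_tmul]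
      rw [mkQ_of_mem_A A ((Subalgebra.mem_toSubmodule A).mp b.2), smul_tmul]
    | add w₁ w₂ h1 h2 =>
      simp only [map_add, TensorProduct.tmul_add] at h1 h2 ⊢
      rw [h1, h2]
  rw [← hw, claim, hw, Coalgebra.rTensor_counit_comul, TensorProduct.lid_tmul, one_smul]

end Aux

/-- Let `A` be a right coideal subalgebra of a Hopf algebra `H` over a
field `k`. If `H` is a generator in left `A`-modules or in right `A`-modules (i.e. the
inclusion `A → H` splits `A`-linearly), then `A` equals the set of left coinvariants
`{h : (π ⊗ id)Δ(h) = π(1) ⊗ h}`, where `π : H → C = H/HA⁺` is the quotient map. -/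
theorem generator_implies_coinvariants
    (H : Type*) [Ring H] [HopfAlgebra k H] (A : Subalgebra k H)
    (hA : IsRightCoidealSubalgebra k H A)
    (hgen :
      (∃ f : H →ₗ[k] H, (∀ h : H, f h ∈ A) ∧
        (∀ (a : ↥A) (h : H), f ((a : H) * h) = (a : H) * f h) ∧ ∀ a ∈ A, f a = a) ∨
      (∃ f : H →ₗ[k] H, (∀ h : H, f h ∈ A) ∧
        (∀ (a : ↥A) (h : H), f (h * (a : H)) = f h * (a : H)) ∧ ∀ a ∈ A, f a = a)) :
    (A : Set H) =
      {h : H | LinearMap.rTensor H (HAplus k H A).mkQ (Coalgebra.comul h) =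
        (HAplus k H A).mkQ 1 ⊗ₜ[k] h} := by
  apply Set.eq_of_subset_of_subset
  · intro a ha
    exact coinv_of_mem A hA ha
  intro h hco
  simp only [Set.mem_setOf_eq] at hco
  -- the "relations" submodule whose quotient is `H ⊗[A] H`
  set D : Submodule k (H ⊗[k] H) := Submodule.span k
    {z : H ⊗[k] H | ∃ x y : H, ∃ a ∈ A, z = (x * a) ⊗ₜ[k] y - x ⊗ₜ[k] (a * y)} with hD
  -- step 1: `comul h - 1 ⊗ h` comes from `HA⁺ ⊗ H`
  have hker : LinearMap.rTensor H (HAplus k H A).mkQ (Coalgebra.comul h - (1 : H) ⊗ₜ[k] h)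
      = 0 := by
    rw [map_sub, hco, LinearMap.rTensor_tmul, sub_self]
  obtain ⟨u, hu⟩ : ∃ u : (HAplus k H A) ⊗[k] H,
      LinearMap.rTensor H (HAplus k H A).subtype u = Coalgebra.comul h - (1 : H) ⊗ₜ[k] h := by
    have := rTensor_mkQ (R := k) H (HAplus k H A)
    have hmem : Coalgebra.comul h - (1 : H) ⊗ₜ[k] h ∈
        LinearMap.ker (LinearMap.rTensor H (HAplus k H A).mkQ) := hker
    rw [this] at hmem
    exact hmem
  -- the map `Γ : H ⊗ H → (H ⊗ H)/D`, `x ⊗ y ↦ Σ x₁ ⊗ S(x₂) y mod D`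
  set Γ : H ⊗[k] H →ₗ[k] (H ⊗[k] H) ⧸ D :=
    D.mkQ ∘ₗ (LinearMap.lTensor H (LinearMap.mul' k H ∘ₗ LinearMap.rTensor H
        (antipode (R := k))))
      ∘ₗ (TensorProduct.assoc k H H H).toLinearMap
      ∘ₗ (LinearMap.rTensor H (Coalgebra.comul (R := k))) with hΓ
  have Γ_tmul : ∀ x y : H, Γ (x ⊗ₜ[k] y) = D.mkQ (LinearMap.lTensor H
      ((LinearMap.mulRight k y) ∘ₗ antipode (R := k)) (Coalgebra.comul x)) := by
    intro x y
    have claim : ∀ w : H ⊗[k] H,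
        LinearMap.lTensor H (LinearMap.mul' k H ∘ₗ LinearMap.rTensor H (antipode (R := k)))
            ((TensorProduct.assoc k H H H) (w ⊗ₜ[k] y))
          = LinearMap.lTensor H ((LinearMap.mulRight k y) ∘ₗ antipode (R := k)) w := by
      intro w
      induction w using TensorProduct.induction_on with
      | zero => simp only [TensorProduct.zero_tmul, LinearMap.map_zero, LinearEquiv.map_zero]
      | tmul s t => simp
      | add w₁ w₂ h1 h2 =>
        simp only [TensorProduct.add_tmul, map_add] at h1 h2 ⊢
        rw [h1, h2]
    simp only [hΓ, LinearMap.comp_apply, LinearEquiv.coe_coe, LinearMap.rTensor_tmul]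
    rw [claim]
  -- step 2: `Γ` kills `HA⁺ ⊗ H`
  have Γ_vanish : ∀ z ∈ HAplus k H A, ∀ y : H, Γ (z ⊗ₜ[k] y) = 0 := by
    intro z hz y
    induction hz using Submodule.span_induction with
    | mem z hzmem =>
      obtain ⟨g, a, ha, hεa, rfl⟩ := hzmem
      rw [Γ_tmul, Bialgebra.comul_mul]
      obtain ⟨w, hw⟩ := hA a ha
      set Ly : H →ₗ[k] H := (LinearMap.mulRight k y) ∘ₗ antipode (R := k) with hLy
      have claim : ∀ (w : (Subalgebra.toSubmodule A) ⊗[k] (⊤ : Submodule k H)) (v : H ⊗[k] H),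
          D.mkQ (LinearMap.lTensor H Ly
              (v * TensorProduct.mapIncl (Subalgebra.toSubmodule A) (⊤ : Submodule k H) w))
            = D.mkQ (LinearMap.lTensor H
                ((LinearMap.mulLeft k (LinearMap.mul' k H (LinearMap.lTensor H
                    (antipode (R := k))
                    (TensorProduct.mapIncl (Subalgebra.toSubmodule A) (⊤ : Submodule k H) w))))
                  ∘ₗ Ly) v) := by
        intro w v
        induction w using TensorProduct.induction_on with
        | zero =>
          simp [LinearMap.mulLeft_zero_eq_zero, LinearMap.lTensor_zero]
        | tmul b c =>
          induction v using TensorProduct.induction_on with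
          | zero => simp
          | tmul s t =>
            simp only [TensorProduct.mapIncl, TensorProduct.map_tmul, Submodule.coe_subtype,
              Algebra.TensorProduct.tmul_mul_tmul, LinearMap.lTensor_tmul,
              LinearMap.comp_apply, LinearMap.mul'_apply, LinearMap.mulLeft_apply, hLy,
              LinearMap.mulRight_apply]
            rw [antipode_mul']
            have hDmem : (s * (b : H)) ⊗ₜ[k] ((antipode (R := k) (c : H) * antipode (R := k) t) * y)
                - s ⊗ₜ[k] ((b : H) * ((antipode (R := k) (c : H) * antipode (R := k) t) * y))
                ∈ D := by
              apply Submodule.subset_span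
              exact ⟨s, (antipode (R := k) (c : H) * antipode (R := k) t) * y, b,
                (Subalgebra.mem_toSubmodule A).mp b.2, rfl⟩
            have := (Submodule.Quotient.eq D).mpr hDmem
            rw [Submodule.mkQ_apply, Submodule.mkQ_apply, this]
            congr 2
            rw [mul_assoc, mul_assoc]
          | add v₁ v₂ h1 h2 =>
            simp only [add_mul, map_add] at h1 h2 ⊢
            rw [h1, h2]
        | add w₁ w₂ h1 h2 =>
          have hml : ∀ N₁ N₂ : H, LinearMap.mulLeft k (N₁ + N₂)
              = LinearMap.mulLeft k N₁ + LinearMap.mulLeft k N₂ := by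
            intro N₁ N₂; ext x; simp [add_mul]
          simp only [map_add, mul_add, hml, LinearMap.add_comp, LinearMap.lTensor_add,
            LinearMap.add_apply] at h1 h2 ⊢
          rw [h1, h2]
      rw [← hw, claim, hw, mul_antipode_lTensor_comul_apply, hεa, map_zero,
        LinearMap.mulLeft_zero_eq_zero, LinearMap.zero_comp, LinearMap.lTensor_zero,
        LinearMap.zero_apply, map_zero]
    | zero => simp
    | add z₁ z₂ _ _ h1 h2 =>
      rw [TensorProduct.add_tmul, map_add, h1, h2, add_zero]
    | smul c z _ h1 =>
      rw [← TensorProduct.smul_tmul', map_smul, h1, smul_zero]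
  -- step 3: `Γ (comul h) = h ⊗ 1 mod D`
  have Γ_comul : Γ (Coalgebra.comul h) = D.mkQ (h ⊗ₜ[k] (1 : H)) := by
    simp only [hΓ, LinearMap.comp_apply, LinearEquiv.coe_coe]
    rw [Coalgebra.coassoc_apply, ← LinearMap.lTensor_comp_apply]
    have hcomp : (LinearMap.mul' k H ∘ₗ LinearMap.rTensor H (antipode (R := k)))
        ∘ₗ Coalgebra.comul = (Algebra.linearMap k H) ∘ₗ Coalgebra.counit := by
      rw [LinearMap.comp_assoc]
      exact mul_antipode_rTensor_comul
    rw [hcomp, LinearMap.lTensor_comp_apply, Coalgebra.lTensor_counit_comul]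
    congr 1
    simp
  -- step 4: `Γ (1 ⊗ h) = 1 ⊗ h mod D`
  have Γ_one : Γ ((1 : H) ⊗ₜ[k] h) = D.mkQ ((1 : H) ⊗ₜ[k] h) := by
    rw [Γ_tmul, Bialgebra.comul_one, Algebra.TensorProduct.one_def]
    simp [antipode_one']
  -- step 5: combine
  have Γ_u : ∀ v : (HAplus k H A) ⊗[k] H,
      Γ (LinearMap.rTensor H (HAplus k H A).subtype v) = 0 := by
    intro v
    induction v using TensorProduct.induction_on with
    | zero => simp
    | tmul z y =>
      rw [LinearMap.rTensor_tmul]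
      exact Γ_vanish z z.2 y
    | add u₁ u₂ h1 h2 =>
      rw [map_add, map_add, h1, h2, add_zero]
  have Γu := Γ_u u
  rw [hu, map_sub, Γ_comul, Γ_one, sub_eq_zero] at Γu
  have hDfin : h ⊗ₜ[k] (1 : H) - (1 : H) ⊗ₜ[k] h ∈ D := by
    rw [← Submodule.Quotient.eq D, ← Submodule.mkQ_apply, ← Submodule.mkQ_apply]
    exact Γu
  -- step 6: use the splitting
  rcases hgen with ⟨f, hf1, hf2, hf3⟩ | ⟨f, hf1, hf2, hf3⟩
  · set F : H ⊗[k] H →ₗ[k] H := LinearMap.mul' k H ∘ₗ LinearMap.lTensor H f with hF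
    have hFD : ∀ z ∈ D, F z = 0 := by
      intro z hz
      induction hz using Submodule.span_induction with
      | mem z hzmem =>
        obtain ⟨x, y, a, ha, rfl⟩ := hzmem
        simp only [hF, map_sub, LinearMap.comp_apply, LinearMap.lTensor_tmul,
          LinearMap.mul'_apply]
        rw [hf2 ⟨a, ha⟩ y, ← mul_assoc, sub_self]
      | zero => simp
      | add z₁ z₂ _ _ h1 h2 => rw [map_add, h1, h2, add_zero]
      | smul c z _ h1 => rw [map_smul, h1, smul_zero]
    have := hFD _ hDfin
    simp only [hF, map_sub, LinearMap.comp_apply, LinearMap.lTensor_tmul,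
      LinearMap.mul'_apply] at this
    rw [hf3 1 A.one_mem, mul_one, one_mul, sub_eq_zero] at this
    rw [this]
    exact hf1 h
  · set F : H ⊗[k] H →ₗ[k] H := LinearMap.mul' k H ∘ₗ LinearMap.rTensor H f with hF
    have hFD : ∀ z ∈ D, F z = 0 := by
      intro z hz
      induction hz using Submodule.span_induction with
      | mem z hzmem =>
        obtain ⟨x, y, a, ha, rfl⟩ := hzmem
        simp only [hF, map_sub, LinearMap.comp_apply, LinearMap.rTensor_tmul,
          LinearMap.mul'_apply]
        rw [hf2 ⟨a, ha⟩ x, mul_assoc, sub_self]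
      | zero => simp
      | add z₁ z₂ _ _ h1 h2 => rw [map_add, h1, h2, add_zero]
      | smul c z _ h1 => rw [map_smul, h1, smul_zero]
    have := hFD _ hDfin
    simp only [hF, map_sub, LinearMap.comp_apply, LinearMap.rTensor_tmul,
      LinearMap.mul'_apply] at this
    rw [hf3 1 A.one_mem, mul_one, one_mul, sub_eq_zero] at this
    rw [← this]
    exact hf1 h
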